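/- Let R be a commutative ring, and suppose elements s̃_r (r ≥ 0, s̃_0 = 1), ŝ_r (r ≥ 0, ŝ_0 = 1), and e_1,...,e_n satisfy ŝ_1 = s̃_1 − e_1 and, for each r ≥ 2, the two determinants det(ŝ_{1+j−i})_{1≤i,j≤r} and det(s̃_{1+j−i} − δ_{rj} e_{1+j−i})_{1≤i,j≤r} are equal (the common value being the r-th column class). If additionally s̃_j = ∑_{i=0}^{j} e_i ŝ_{j−i} for all 1 ≤ j ≤ r−1, then s̃_r = ∑_{i=0}^{r} e_i ŝ_{r−i}. -/

import Mathlib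

/-!
Let `σ` be the convolution of `e` and `ŝ`, and `x = s̃_r - σ_r`. The unitriangular Toeplitz matrix
`E = (e_{j-i})` times the Hessenberg matrix `A = (ŝ_{1+j-i})` is the matrix on the right of the
determinant hypothesis with `s̃` replaced by `σ`: truncating the convolution only loses the terms
`e_{r-i} ŝ_0` of the last column. By the inductive hypothesis `s̃` and `σ` agree below `r`, so the
right-hand matrix is `E * A` plus `x` in its top-right corner, and expanding along the last column
gives `det A = det A + (-1)^(r-1) x`.
-/

/-- A sequence extended to integer indices, vanishing for negative indices. -/
def seqZ {R : Type*} [CommRing R] (c : ℕ → R) (m : ℤ) : R :=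
  if 0 ≤ m then c m.toNat else 0

open Finset Matrix

section

variable {R : Type*} [CommRing R]

theorem Matrix.det_add_single_zero_last {q : ℕ} (M : Matrix (Fin (q + 1)) (Fin (q + 1)) R)
    (x : R) :
    det (M + single 0 (Fin.last q) x) =
      det M + (-1) ^ q * x * det (M.submatrix Fin.succ Fin.castSucc) := by
  have hminor : ∀ i : Fin (q + 1),
      (M + single 0 (Fin.last q) x).submatrix i.succAbove (Fin.last q).succAbove =
        M.submatrix i.succAbove (Fin.last q).succAbove := by
    intro i
    ext k l
    simp only [submatrix_apply, add_apply, Fin.succAbove_last,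
      single_apply_of_col_ne _ _ (Fin.castSucc_lt_last l).ne', add_zero]
  rw [det_succ_column _ (Fin.last q), det_succ_column M (Fin.last q)]
  simp only [hminor, add_apply, mul_add, add_mul, sum_add_distrib]
  congr 1
  rw [sum_eq_single (0 : Fin (q + 1))]
  · simp
  · intro i _ hi
    simp [single_apply_of_row_ne hi.symm]
  · simp

theorem seqZ_natCast (c : ℕ → R) (k : ℕ) : seqZ c k = c k := by
  simp [seqZ]

theorem seqZ_of_neg (c : ℕ → R) {z : ℤ} (hz : z < 0) : seqZ c z = 0 := by
  simp [seqZ, not_le.2 hz]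

def seqConv (e s : ℕ → R) (j : ℕ) : R :=
  ∑ i ∈ range (j + 1), e i * s (j - i)

theorem sum_range_seqZ_mul_seqZ (e s : ℕ → R) {i N : ℕ} {w : ℤ} (hw : w ≤ N) :
    ∑ k ∈ range (N + 1), seqZ e (k - i) * seqZ s (w - k) = seqZ (seqConv e s) (w - i) := by
  rcases lt_or_ge (w - i) 0 with hneg | hnn
  · rw [seqZ_of_neg _ hneg]
    refine sum_eq_zero fun k _ => ?_
    rcases lt_or_ge (k : ℤ) i with hk | hk
    · rw [seqZ_of_neg e (by omega), zero_mul]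
    · rw [seqZ_of_neg s (by omega), mul_zero]
  obtain ⟨m, hm⟩ : ∃ m : ℕ, w - i = m := ⟨(w - i).toNat, by omega⟩
  have hsupp : Ico i (i + m + 1) ⊆ range (N + 1) := by
    intro k hk
    simp only [mem_Ico, mem_range] at hk ⊢
    omega
  rw [hm, seqZ_natCast, seqConv, ← sum_subset hsupp, sum_Ico_eq_sum_range]
  · refine sum_congr (by congr 1; omega) fun t ht => ?_
    have ht : t ≤ m := Nat.lt_succ_iff.mp (mem_range.mp ht)
    rw [show ((i + t : ℕ) : ℤ) - i = t by push_cast; ring, seqZ_natCast,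
      show w - ((i + t : ℕ) : ℤ) = ((m - t : ℕ) : ℤ) by omega, seqZ_natCast]
  · intro k _ hk
    simp only [mem_Ico, not_and_or, not_le, not_lt] at hk
    rcases hk with hk | hk
    · rw [seqZ_of_neg e (by omega), zero_mul]
    · rw [seqZ_of_neg s (by omega), mul_zero]

def upperToeplitz (c : ℕ → R) (m : ℕ) : Matrix (Fin m) (Fin m) R :=
  of fun i j => seqZ c (j - i)

def toeplitzHessenberg (c : ℕ → R) (m : ℕ) : Matrix (Fin m) (Fin m) R :=
  of fun i j => seqZ c (1 + j - i)

def hessenbergSubLastCol (s e : ℕ → R) (m : ℕ) : Matrix (Fin m) (Fin m) R :=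
  of fun i j => seqZ s (1 + j - i) - if j.val = m - 1 then seqZ e (1 + j - i) else 0

theorem det_upperToeplitz (c : ℕ → R) (hc : c 0 = 1) (m : ℕ) : det (upperToeplitz c m) = 1 := by
  have htri : (upperToeplitz c m).IsUpperTriangular :=
    fun i j (hij : j < i) => seqZ_of_neg c (by omega)
  rw [det_of_isUpperTriangular htri]
  simp [upperToeplitz, seqZ, hc]

theorem upperToeplitz_mul_toeplitzHessenberg (e s : ℕ → R) (hs : s 0 = 1) (m : ℕ) :
    upperToeplitz e m * toeplitzHessenberg s m = hessenbergSubLastCol (seqConv e s) e m := by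
  ext i j
  have hconv := sum_range_seqZ_mul_seqZ e s (i := i) (N := m) (w := 1 + j) (by omega)
  rw [sum_range_succ] at hconv
  simp only [mul_apply, upperToeplitz, toeplitzHessenberg, hessenbergSubLastCol, of_apply]
  rw [← hconv, Fin.sum_univ_eq_sum_range (fun k => seqZ e (k - i) * seqZ s (1 + j - k))]
  suffices h : seqZ e (m - i) * seqZ s (1 + j - m) =
      if j.val = m - 1 then seqZ e (1 + j - i) else 0 by
    rw [h, add_sub_cancel_right]
  split_ifs with hj
  · rw [show (1 + j - m : ℤ) = (0 : ℕ) by omega, seqZ_natCast, hs, mul_one]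
    congr 1
    omega
  · rw [seqZ_of_neg s (by omega), mul_zero]

theorem hessenbergSubLastCol_eq_add_single (a b e : ℕ → R) {q : ℕ}
    (hab : ∀ z : ℤ, z ≤ q → seqZ a z = seqZ b z) :
    hessenbergSubLastCol a e (q + 1) =
      hessenbergSubLastCol b e (q + 1) + single 0 (Fin.last q) (a (q + 1) - b (q + 1)) := by
  ext i j
  by_cases hij : i = 0 ∧ j = Fin.last q
  · obtain ⟨rfl, rfl⟩ := hij
    simp only [hessenbergSubLastCol, Matrix.add_apply, single_apply_same, of_apply, Fin.val_zero,
      Fin.val_last, Nat.cast_zero, sub_zero, add_comm (1 : ℤ), ← Nat.cast_succ, seqZ_natCast]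
    ring
  · have hlt : 1 + (j : ℤ) - i ≤ q := by
      rcases not_and_or.mp hij with hi | hj
      · have := Fin.pos_iff_ne_zero.mpr hi
        omega
      · have := Fin.lt_last_iff_ne_last.mpr hj
        omega
    have hne : ¬((0 : Fin (q + 1)) = i ∧ Fin.last q = j) := fun h => hij ⟨h.1.symm, h.2.symm⟩
    simp only [hessenbergSubLastCol, Matrix.add_apply, of_apply, hab _ hlt, single_apply, hne,
      if_false, add_zero]

theorem hessenbergSubLastCol_submatrix_succ_castSucc (s e : ℕ → R) (q : ℕ) :
    (hessenbergSubLastCol s e (q + 1)).submatrix Fin.succ Fin.castSucc = upperToeplitz s q := by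
  ext i j
  simp only [hessenbergSubLastCol, upperToeplitz, submatrix_apply, of_apply, Fin.val_succ,
    Fin.val_castSucc, Nat.add_sub_cancel, j.isLt.ne, if_false, sub_zero]
  congr 1
  push_cast
  ring

theorem seqZ_eq_seqConv_of_le (s e h : ℕ → R) (hs0 : s 0 = 1) (he0 : e 0 = 1) (hh0 : h 0 = 1)
    {q : ℕ} (hconv : ∀ j, 1 ≤ j → j ≤ q → s j = seqConv e h j) :
    ∀ z : ℤ, z ≤ q → seqZ s z = seqZ (seqConv e h) z := by
  intro z hz
  rcases lt_or_ge z 0 with hneg | hnn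
  · rw [seqZ_of_neg _ hneg, seqZ_of_neg _ hneg]
  obtain ⟨k, rfl⟩ : ∃ k : ℕ, z = k := ⟨z.toNat, by omega⟩
  rw [seqZ_natCast, seqZ_natCast]
  rcases Nat.eq_zero_or_pos k with rfl | hk
  · simp [seqConv, hs0, he0, hh0]
  · exact hconv k hk (by omega)

end

theorem recursion_inductive_step_general {R : Type*} [CommRing R] (st sh e : ℕ → R)
    (hsh0 : sh 0 = 1) (hst0 : st 0 = 1) (he0 : e 0 = 1)
    (hdet : ∀ m, 2 ≤ m →
      Matrix.det (Matrix.of fun i j : Fin m =>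
          seqZ sh (1 + (j.val : ℤ) - (i.val : ℤ))) =
        Matrix.det (Matrix.of fun i j : Fin m =>
          seqZ st (1 + (j.val : ℤ) - (i.val : ℤ)) -
            if j.val = m - 1 then seqZ e (1 + (j.val : ℤ) - (i.val : ℤ)) else 0))
    (r : ℕ) (hr : 2 ≤ r)
    (hind : ∀ j, 1 ≤ j → j ≤ r - 1 →
      st j = ∑ i ∈ Finset.range (j + 1), e i * sh (j - i)) :
    st r = ∑ i ∈ Finset.range (r + 1), e i * sh (r - i) := by
  obtain ⟨q, rfl⟩ : ∃ q, r = q + 1 := ⟨r - 1, by omega⟩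
  have hσ0 : seqConv e sh 0 = 1 := by simp [seqConv, he0, hsh0]
  have hst := seqZ_eq_seqConv_of_le st e sh hst0 he0 hsh0 (q := q) hind
  have key : det (toeplitzHessenberg sh (q + 1)) = det (hessenbergSubLastCol st e (q + 1)) :=
    hdet (q + 1) hr
  rw [hessenbergSubLastCol_eq_add_single st _ e hst, det_add_single_zero_last,
    hessenbergSubLastCol_submatrix_succ_castSucc, det_upperToeplitz _ hσ0,
    ← upperToeplitz_mul_toeplitzHessenberg e sh hsh0, det_mul, det_upperToeplitz e he0, one_mul,
    mul_one, left_eq_add, neg_one_pow_mul_eq_zero_iff, sub_eq_zero] at key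
  exact key

/-- Inductive step of the recursion `σ̃_r = ∑_{i=0}^{r} e_i σ̂_{r-i}`: suppose
`ŝ_0 = s̃_0 = e_0 = 1`, `e_m = 0` for `m > n`, `ŝ_1 = s̃_1 - e_1`, and for each `m ≥ 2`
the determinants `det (ŝ_{1+j-i})_{1 ≤ i,j ≤ m}` and
`det (s̃_{1+j-i} - δ_{m j} e_{1+j-i})_{1 ≤ i,j ≤ m}` agree. If moreover
`s̃_j = ∑_{i=0}^{j} e_i ŝ_{j-i}` for all `1 ≤ j ≤ r - 1`, then
`s̃_r = ∑_{i=0}^{r} e_i ŝ_{r-i}`. -/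
theorem recursion_inductive_step {R : Type*} [CommRing R] (n : ℕ) (st sh e : ℕ → R)
    (hsh0 : sh 0 = 1) (hst0 : st 0 = 1) (he0 : e 0 = 1)
    (hen : ∀ m, n < m → e m = 0)
    (h1 : sh 1 = st 1 - e 1)
    (hdet : ∀ m, 2 ≤ m →
      Matrix.det (Matrix.of fun i j : Fin m =>
          seqZ sh (1 + (j.val : ℤ) - (i.val : ℤ))) =
        Matrix.det (Matrix.of fun i j : Fin m =>
          seqZ st (1 + (j.val : ℤ) - (i.val : ℤ)) -
            if j.val = m - 1 then seqZ e (1 + (j.val : ℤ) - (i.val : ℤ)) else 0))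
    (r : ℕ) (hr : 2 ≤ r)
    (hind : ∀ j, 1 ≤ j → j ≤ r - 1 →
      st j = ∑ i ∈ Finset.range (j + 1), e i * sh (j - i)) :
    st r = ∑ i ∈ Finset.range (r + 1), e i * sh (r - i) :=
  recursion_inductive_step_general st sh e hsh0 hst0 he0 hdet r hr hind
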